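/- Let d be a positive integer and let Q be a cube in ℝ^d. Suppose Q is the union of three pairwise disjoint measurable sets E₊, E₋, G with min{λ(E₊), λ(E₋)} > (√2 − 1)·λ(G). Then there exists a cube W ⊆ Q such that min{λ(E₊ ∩ W), λ(E₋ ∩ W)} ≥ 2^{−d}(3 − 2√2)·λ(W). Consequently, (√2 − 1, 2^{−d}(3 − 2√2)) is a John–Strömberg pair for the collection of all cubes in ℝ^d. -/

import Mathlib

/-!
Write `τ = √2 - 1` and `σ = 2⁻ᵈ τ²`. If both `Ep` and `Em` fill a `σ`-fraction of `Q`, take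
`W = Q`. Otherwise let `E` be the sparse one and stop on the maximal dyadic subcubes `W` of `Q`
in which `E` has density at least `σ`. Their parents are sparse, so `|E ∩ W| ≤ 2ᵈ σ |W| = τ² |W|`,
and by Lebesgue's density theorem they cover almost all of `E`. If every such cube had
`|G ∩ W| > τ |W|`, summing would give `|E| ≤ τ |G|`; so on some stopping cube `G` has density at
most `τ`, and the remaining set has density at least `1 - τ² - τ = τ ≥ σ` there.
-/

open MeasureTheory Set

/-- A closed axis-parallel cube in `ℝ^d` with positive side length. -/
def IsCube {d : ℕ} (Q : Set (Fin d → ℝ)) : Prop :=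
  ∃ (a : Fin d → ℝ) (r : ℝ), 0 < r ∧ Q = Set.univ.pi fun i => Set.Icc (a i) (a i + r)

/-- `(τ,s)` is a John–Strömberg pair for the collection `𝓔`. -/
def IsJSPair {X : Type*} [MeasurableSpace X] (μ : Measure X)
    (𝓔 : Set (Set X)) (τ s : ℝ) : Prop :=
  0 < τ ∧ 0 < s ∧
  ∀ Q ∈ 𝓔, ∀ Ep Em G : Set X,
    MeasurableSet Ep → MeasurableSet Em → MeasurableSet G →
    Disjoint Ep Em → Disjoint Ep G → Disjoint Em G →
    Q = Ep ∪ Em ∪ G →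
    ENNReal.ofReal τ * μ G < min (μ Ep) (μ Em) →
    ∃ W ∈ 𝓔, W ⊆ Q ∧ ENNReal.ofReal s * μ W ≤ min (μ (W ∩ Ep)) (μ (W ∩ Em))


open Filter Topology
open scoped ENNReal

section Dyadic

variable {d : ℕ}

def dyadicCube (a : Fin d → ℝ) (r : ℝ) (k : ℕ) (j : Fin d → ℕ) : Set (Fin d → ℝ) :=
  univ.pi fun i => Icc (a i + j i * (r / 2 ^ k)) (a i + (j i + 1) * (r / 2 ^ k))

noncomputable def dyadicIndex (a : Fin d → ℝ) (r : ℝ) (k : ℕ) (x : Fin d → ℝ) : Fin d → ℕ :=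
  fun i => ⌊(x i - a i) / (r / 2 ^ k)⌋₊

/-- For `x` in the half-open cube `∏ i, [a i, a i + r)`, the dyadic cube of generation `k`
containing `x`. -/
noncomputable def dyadicCubeAt (a : Fin d → ℝ) (r : ℝ) (k : ℕ) (x : Fin d → ℝ) :
    Set (Fin d → ℝ) :=
  dyadicCube a r k (dyadicIndex a r k x)

lemma Icc_nat_mul_subset_Icc_div (c : ℝ) {s : ℝ} (hs : 0 ≤ s) (j : ℕ) {n : ℕ} (hn : 0 < n) :
    Icc (c + j * s) (c + (j + 1) * s) ⊆
      Icc (c + (j / n : ℕ) * (n * s)) (c + ((j / n : ℕ) + 1) * (n * s)) := by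
  have hlow : ((j / n * n : ℕ) : ℝ) ≤ j := by exact_mod_cast Nat.div_mul_le_self j n
  have hup : (j + 1 : ℝ) ≤ ((j / n * n + n : ℕ) : ℝ) := by exact_mod_cast Nat.lt_div_mul_add hn
  push_cast at hlow hup
  apply Icc_subset_Icc <;> nlinarith

lemma aedisjoint_Icc_nat_mul (c : ℝ) {s : ℝ} (hs : 0 ≤ s) {j j' : ℕ} (h : j < j') :
    AEDisjoint volume (Icc (c + j * s) (c + (j + 1) * s))
      (Icc (c + j' * s) (c + (j' + 1) * s)) := by
  have hjj' : (j + 1 : ℝ) ≤ j' := by exact_mod_cast h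
  rw [AEDisjoint, Icc_inter_Icc, Real.volume_Icc, ENNReal.ofReal_eq_zero, sub_nonpos]
  exact min_le_left _ _ |>.trans <| le_max_of_le_right <| by gcongr

variable (a : Fin d → ℝ) {r : ℝ}

lemma isCube_dyadicCube (hr : 0 < r) (k : ℕ) (j : Fin d → ℕ) : IsCube (dyadicCube a r k j) :=
  ⟨fun i => a i + j i * (r / 2 ^ k), r / 2 ^ k, by positivity, by
    simp only [dyadicCube, add_mul, one_mul, add_assoc]⟩

lemma dyadicCube_zero (r : ℝ) : dyadicCube a r 0 0 = univ.pi fun i => Icc (a i) (a i + r) := by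
  simp [dyadicCube]

lemma dyadicCube_eq_closedBall (hr : 0 ≤ r) (k : ℕ) (j : Fin d → ℕ) :
    dyadicCube a r k j =
      Metric.closedBall (fun i => a i + (j i + 1 / 2) * (r / 2 ^ k)) (r / 2 ^ k / 2) := by
  rw [closedBall_pi _ (by positivity), dyadicCube]
  congr! 2 with i
  rw [Real.closedBall_eq_Icc]
  ring_nf

lemma volume_dyadicCube (k : ℕ) (j : Fin d → ℕ) :
    volume (dyadicCube a r k j) = ENNReal.ofReal (r / 2 ^ k) ^ d := by
  simp only [dyadicCube, volume_pi_pi, Real.volume_Icc, add_mul, one_mul, ← add_assoc,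
    add_sub_cancel_left, Finset.prod_const, Finset.card_univ, Fintype.card_fin]

lemma volume_dyadicCube_eq_two_pow_mul (k : ℕ) (j j' : Fin d → ℕ) :
    volume (dyadicCube a r k j) = 2 ^ d * volume (dyadicCube a r (k + 1) j') := by
  rw [volume_dyadicCube, volume_dyadicCube, show r / 2 ^ k = 2 * (r / 2 ^ (k + 1)) by ring,
    ENNReal.ofReal_mul zero_le_two, mul_pow, ENNReal.ofReal_ofNat]

lemma dyadicCube_add_subset (hr : 0 ≤ r) (k m : ℕ) (j : Fin d → ℕ) :
    dyadicCube a r (k + m) j ⊆ dyadicCube a r k fun i => j i / 2 ^ m := by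
  have hs : r / 2 ^ k = (2 ^ m : ℕ) * (r / 2 ^ (k + m)) := by push_cast; field_simp; ring
  rw [dyadicCube, dyadicCube, hs]
  exact pi_mono fun i _ => Icc_nat_mul_subset_Icc_div _ (by positivity) _ (by positivity)

lemma aedisjoint_dyadicCube (hr : 0 ≤ r) {k : ℕ} {j j' : Fin d → ℕ} (h : j ≠ j') :
    AEDisjoint volume (dyadicCube a r k j) (dyadicCube a r k j') := by
  obtain ⟨i, hi⟩ := Function.ne_iff.1 h
  rw [AEDisjoint, dyadicCube, dyadicCube, ← pi_inter_distrib, volume_pi_pi]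
  refine Finset.prod_eq_zero (Finset.mem_univ i) ?_
  rcases hi.lt_or_gt with hlt | hlt
  · exact aedisjoint_Icc_nat_mul _ (by positivity) hlt
  · exact (aedisjoint_Icc_nat_mul _ (by positivity) hlt).symm

lemma dyadicIndex_add_div (r : ℝ) (k m : ℕ) (x : Fin d → ℝ) :
    (fun i => dyadicIndex a r (k + m) x i / 2 ^ m) = dyadicIndex a r k x := by
  have hs : r / 2 ^ (k + m) * (2 ^ m : ℕ) = r / 2 ^ k := by push_cast; rw [pow_add]; field_simp
  funext i
  rw [dyadicIndex, dyadicIndex, ← Nat.floor_div_natCast, div_div, hs]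

lemma mem_dyadicCubeAt (hr : 0 < r) {x : Fin d → ℝ} (hx : ∀ i, a i ≤ x i) (k : ℕ) :
    x ∈ dyadicCubeAt a r k x := by
  intro i _
  have hs : 0 < r / 2 ^ k := by positivity
  have h0 : 0 ≤ (x i - a i) / (r / 2 ^ k) := div_nonneg (sub_nonneg.2 (hx i)) hs.le
  have hlow := (le_div_iff₀ hs).1 (Nat.floor_le h0)
  have hup := (div_lt_iff₀ hs).1 (Nat.lt_floor_add_one ((x i - a i) / (r / 2 ^ k)))
  constructor <;> simp only [dyadicIndex] <;> linarith

lemma dyadicCubeAt_anti (hr : 0 ≤ r) (x : Fin d → ℝ) {k l : ℕ} (h : k ≤ l) :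
    dyadicCubeAt a r l x ⊆ dyadicCubeAt a r k x := by
  obtain ⟨m, rfl⟩ := Nat.exists_eq_add_of_le h
  rw [dyadicCubeAt, dyadicCubeAt, ← dyadicIndex_add_div a r k m x]
  exact dyadicCube_add_subset a hr k m _

lemma dyadicCubeAt_zero (hr : 0 < r) {x : Fin d → ℝ} (hx : ∀ i, x i < a i + r) :
    dyadicCubeAt a r 0 x = univ.pi fun i => Icc (a i) (a i + r) := by
  have : dyadicIndex a r 0 x = 0 := funext fun i => by
    simpa [dyadicIndex, Nat.floor_eq_zero, div_lt_one hr, sub_lt_iff_lt_add'] using hx i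
  rw [dyadicCubeAt, this, dyadicCube_zero]

lemma ae_tendsto_measure_inter_dyadicCubeAt_div (hr : 0 < r) (E : Set (Fin d → ℝ)) :
    ∀ᵐ x ∂volume.restrict E, (∀ i, a i ≤ x i) →
      Tendsto (fun k => volume (E ∩ dyadicCubeAt a r k x) / volume (dyadicCubeAt a r k x))
        atTop (𝓝 1) := by
  filter_upwards [IsUnifLocDoublingMeasure.ae_tendsto_measure_inter_div volume E 1] with x hx hax
  simp only [dyadicCubeAt, dyadicCube_eq_closedBall a hr.le]
  refine hx _ _ (tendsto_nhdsWithin_iff.2 ⟨?_, .of_forall fun k => mem_Ioi.2 (by positivity)⟩)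
    (.of_forall fun k => ?_)
  · simpa using (tendsto_const_nhds.div_atTop
      (tendsto_pow_atTop_atTop_of_one_lt one_lt_two)).div_const (2 : ℝ)
  · simpa only [one_mul, dyadicCubeAt, dyadicCube_eq_closedBall a hr.le]
      using mem_dyadicCubeAt a hr hax k

end Dyadic

lemma IsCube.isCompact {d : ℕ} {Q : Set (Fin d → ℝ)} (hQ : IsCube Q) : IsCompact Q := by
  obtain ⟨a, r, -, rfl⟩ := hQ
  exact isCompact_univ_pi fun _ => isCompact_Icc

lemma exists_mem_measure_inter_le {X : Type*} [MeasurableSpace X] {μ : Measure X}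
    {𝒮 : Set (Set X)} {E G : Set X} {t : ℝ≥0∞} (h𝒮 : 𝒮.Countable)
    (hmeas : ∀ W ∈ 𝒮, MeasurableSet W) (hdisj : 𝒮.Pairwise (AEDisjoint μ)) (hG : MeasurableSet G)
    (hcover : ∀ᵐ x ∂μ, x ∈ E → ∃ W ∈ 𝒮, x ∈ W) (hE : ∀ W ∈ 𝒮, μ (E ∩ W) ≤ t ^ 2 * μ W)
    (hGE : t * μ G < μ E) : ∃ W ∈ 𝒮, μ (G ∩ W) ≤ t * μ W := by
  have : Countable 𝒮 := h𝒮.to_subtype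
  by_contra! h
  refine hGE.not_ge ?_
  calc μ E ≤ μ (⋃ W : 𝒮, E ∩ W) := measure_mono_ae <| hcover.mono fun x hx hxE => by
          obtain ⟨W, hW, hxW⟩ := hx hxE
          exact mem_iUnion.2 ⟨⟨W, hW⟩, hxE, hxW⟩
    _ ≤ ∑' W : 𝒮, μ (E ∩ W) := measure_iUnion_le _
    _ ≤ ∑' W : 𝒮, t * (t * μ W) := ENNReal.tsum_le_tsum fun W => (hE W W.2).trans_eq (by ring)
    _ ≤ ∑' W : 𝒮, t * μ (G ∩ W) := ENNReal.tsum_le_tsum fun W => by gcongr; exact (h W W.2).le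
    _ = t * ∑' W : 𝒮, μ (G ∩ W) := ENNReal.tsum_mul_left
    _ ≤ t * μ (⋃ W : 𝒮, G ∩ W) := by
          gcongr
          exact tsum_meas_le_meas_iUnion_of_disjoint₀ μ
            (fun W => (hG.inter (hmeas W W.2)).nullMeasurableSet)
            (fun W W' hne => (hdisj W.2 W'.2 (Subtype.coe_injective.ne hne)).mono
              inter_subset_right inter_subset_right)
    _ ≤ t * μ G := by gcongr; exact iUnion_subset fun W => inter_subset_left

lemma le_measure_inter_of_subset_union {X : Type*} [MeasurableSpace X] {μ : Measure X}
    {W E F G : Set X} {σ s t : ℝ≥0∞} (hW : μ W ≠ ⊤) (hcover : W ⊆ E ∪ F ∪ G)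
    (hE : μ (E ∩ W) ≤ s * μ W) (hG : μ (G ∩ W) ≤ t * μ W) (hsum : σ + s + t ≤ 1) :
    σ * μ W ≤ μ (F ∩ W) := by
  have hst : s + t ≠ ⊤ := ne_top_of_le_ne_top ENNReal.one_ne_top <| by
    rw [add_assoc] at hsum; exact le_add_self.trans hsum
  have hWsplit : μ W ≤ μ (E ∩ W) + μ (F ∩ W) + μ (G ∩ W) := by
    calc μ W ≤ μ (E ∩ W ∪ F ∩ W ∪ G ∩ W) := by
          rw [← union_inter_distrib_right, ← union_inter_distrib_right]
          exact measure_mono (subset_inter hcover subset_rfl)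
      _ ≤ _ := (measure_union_le _ _).trans (by gcongr; exact measure_union_le _ _)
  refine (ENNReal.add_le_add_iff_right (ENNReal.mul_ne_top hst hW)).1 ?_
  calc σ * μ W + (s + t) * μ W = (σ + s + t) * μ W := by ring
    _ ≤ 1 * μ W := by gcongr
    _ ≤ μ (E ∩ W) + μ (F ∩ W) + μ (G ∩ W) := (one_mul (μ W)).trans_le hWsplit
    _ ≤ s * μ W + μ (F ∩ W) + t * μ W := by gcongr
    _ = μ (F ∩ W) + (s + t) * μ W := by ring

section StoppingCubes

variable {d : ℕ} (a : Fin d → ℝ) (r : ℝ) (σ : ℝ≥0∞) (E : Set (Fin d → ℝ))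

/-- The Calderón–Zygmund cubes of `E` at height `σ`: the maximal dyadic subcubes of
`∏ i, [a i, a i + r]` in which `E` has density at least `σ`. -/
def stoppingCubes : Set (Set (Fin d → ℝ)) :=
  {W | ∃ x ∈ univ.pi fun i => Ico (a i) (a i + r), ∃ k, W = dyadicCubeAt a r k x ∧
    σ * volume W ≤ volume (E ∩ W) ∧
    ∀ l < k, volume (E ∩ dyadicCubeAt a r l x) < σ * volume (dyadicCubeAt a r l x)}

variable {a r σ E}

lemma countable_stoppingCubes : (stoppingCubes a r σ E).Countable :=
  (countable_range fun p : ℕ × (Fin d → ℕ) => dyadicCube a r p.1 p.2).mono <| by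
    rintro _ ⟨x, -, k, rfl, -⟩
    exact ⟨(k, _), rfl⟩

lemma le_measure_inter_of_mem_stoppingCubes {W : Set (Fin d → ℝ)}
    (hW : W ∈ stoppingCubes a r σ E) : σ * volume W ≤ volume (E ∩ W) := by
  obtain ⟨-, -, -, -, h, -⟩ := hW
  exact h

lemma isCube_of_mem_stoppingCubes (hr : 0 < r) {W : Set (Fin d → ℝ)}
    (hW : W ∈ stoppingCubes a r σ E) :
    IsCube W := by
  obtain ⟨x, -, k, rfl, -⟩ := hW
  exact isCube_dyadicCube a hr k _

lemma subset_of_mem_stoppingCubes (hr : 0 < r) {W : Set (Fin d → ℝ)}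
    (hW : W ∈ stoppingCubes a r σ E) :
    W ⊆ univ.pi fun i => Icc (a i) (a i + r) := by
  obtain ⟨x, hx, k, rfl, -⟩ := hW
  rw [← dyadicCubeAt_zero a hr fun i => (hx i trivial).2]
  exact dyadicCubeAt_anti a hr.le x k.zero_le

/-- The parent of a stopping cube has `2 ^ d` times its volume and `E`-density less than `σ`. -/
lemma measure_inter_le_of_mem_stoppingCubes (hr : 0 < r)
    (hQ : volume (E ∩ univ.pi fun i => Icc (a i) (a i + r)) <
      σ * volume (univ.pi fun i => Icc (a i) (a i + r)))
    {W : Set (Fin d → ℝ)} (hW : W ∈ stoppingCubes a r σ E) :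
    volume (E ∩ W) ≤ σ * 2 ^ d * volume W := by
  obtain ⟨x, hx, k, rfl, hgood, hfirst⟩ := hW
  rcases k with _ | l
  · rw [dyadicCubeAt_zero a hr fun i => (hx i trivial).2] at hgood
    exact absurd hgood hQ.not_ge
  calc volume (E ∩ dyadicCubeAt a r (l + 1) x)
      ≤ volume (E ∩ dyadicCubeAt a r l x) :=
        measure_mono (inter_subset_inter_right _ (dyadicCubeAt_anti a hr.le x l.le_succ))
    _ ≤ σ * volume (dyadicCubeAt a r l x) := (hfirst l l.lt_succ_self).le
    _ = σ * 2 ^ d * volume (dyadicCubeAt a r (l + 1) x) := by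
        rw [dyadicCubeAt, dyadicCubeAt, volume_dyadicCube_eq_two_pow_mul, mul_assoc]

lemma pairwise_aedisjoint_stoppingCubes (hr : 0 ≤ r) :
    (stoppingCubes a r σ E).Pairwise (AEDisjoint volume) := by
  rintro _ ⟨x, -, k, rfl, hk, hkfirst⟩ _ ⟨y, -, l, rfl, hl, hlfirst⟩ hne
  wlog hkl : k ≤ l generalizing x y k l
  · exact (this y l hl hlfirst x k hk hkfirst hne.symm (le_of_not_ge hkl)).symm
  by_cases hxy : dyadicIndex a r k y = dyadicIndex a r k x
  · have hcube : dyadicCubeAt a r k y = dyadicCubeAt a r k x := by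
      simp only [dyadicCubeAt, hxy]
    obtain rfl : l = k :=
      le_antisymm (not_lt.1 fun hlt => (hlfirst k hlt).not_ge (hcube ▸ hk)) hkl
    exact absurd hcube.symm hne
  · exact (aedisjoint_dyadicCube a hr (Ne.symm hxy)).mono subset_rfl
      (dyadicCubeAt_anti a hr y hkl)

lemma ae_exists_mem_stoppingCubes (hr : 0 < r) (hσ : σ < 1)
    (hEQ : E ⊆ univ.pi fun i => Icc (a i) (a i + r)) :
    ∀ᵐ x, x ∈ E → ∃ W ∈ stoppingCubes a r σ E, x ∈ W := by
  have hQ : ∀ᵐ x, x ∈ (univ.pi fun i => Icc (a i) (a i + r)) →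
      x ∈ univ.pi fun i => Ico (a i) (a i + r) :=
    (Measure.pi_Ico_ae_eq_pi_Icc (μ := fun _ => volume)).mem_iff.mono fun x h => h.2
  filter_upwards [ae_imp_of_ae_restrict (ae_tendsto_measure_inter_dyadicCubeAt_div a hr E), hQ]
    with x hdens hxQ hxE
  have hx := hxQ (hEQ hxE)
  have hlow : ∀ i, a i ≤ x i := fun i => (hx i trivial).1
  have hgood : ∃ k, σ * volume (dyadicCubeAt a r k x) ≤ volume (E ∩ dyadicCubeAt a r k x) :=
    ((hdens hxE hlow).eventually (lt_mem_nhds hσ)).exists.imp fun k hk =>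
      ENNReal.mul_le_of_le_div hk.le
  classical
  exact ⟨_, ⟨x, hx, Nat.find hgood, rfl, Nat.find_spec hgood,
    fun l hl => not_le.1 (Nat.find_min hgood hl)⟩, mem_dyadicCubeAt a hr hlow _⟩

end StoppingCubes

theorem exists_isCube_subset_le_measure_inter_of_lt {d : ℕ} {a : Fin d → ℝ} {r : ℝ}
    (hr : 0 < r) {σ t : ℝ≥0∞} (ht : t ≠ 0) (hσt : σ * 2 ^ d ≤ t ^ 2) (hsum : σ + t ^ 2 + t ≤ 1)
    {E F G : Set (Fin d → ℝ)} (hG : MeasurableSet G)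
    (hEQ : E ⊆ univ.pi fun i => Icc (a i) (a i + r))
    (hQ : (univ.pi fun i => Icc (a i) (a i + r)) ⊆ E ∪ F ∪ G)
    (hE : volume E < σ * volume (univ.pi fun i => Icc (a i) (a i + r)))
    (hGE : t * volume G < volume E) :
    ∃ W, IsCube W ∧ W ⊆ (univ.pi fun i => Icc (a i) (a i + r)) ∧
      σ * volume W ≤ volume (E ∩ W) ∧ σ * volume W ≤ volume (F ∩ W) := by
  have hσ : σ < 1 := calc
    σ < σ + t := ENNReal.lt_add_right (ne_top_of_le_ne_top ENNReal.one_ne_top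
      (le_self_add.trans (le_self_add.trans hsum))) ht
    _ ≤ σ + t ^ 2 + t := by gcongr; exact le_self_add
    _ ≤ 1 := hsum
  rw [← inter_eq_left.2 hEQ] at hE
  have hdens : ∀ W ∈ stoppingCubes a r σ E, volume (E ∩ W) ≤ t ^ 2 * volume W := fun W hW =>
    (measure_inter_le_of_mem_stoppingCubes hr hE hW).trans (by gcongr)
  obtain ⟨W, hWS, hGW⟩ := exists_mem_measure_inter_le countable_stoppingCubes
    (fun W hW => (isCube_of_mem_stoppingCubes hr hW).isCompact.isClosed.measurableSet)
    (pairwise_aedisjoint_stoppingCubes hr.le) hG (ae_exists_mem_stoppingCubes hr hσ hEQ)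
    hdens hGE
  have hW := isCube_of_mem_stoppingCubes hr hWS
  have hWQ := subset_of_mem_stoppingCubes hr hWS
  exact ⟨W, hW, hWQ, le_measure_inter_of_mem_stoppingCubes hWS,
    le_measure_inter_of_subset_union hW.isCompact.measure_lt_top.ne (hWQ.trans hQ)
      (hdens W hWS) hGW hsum⟩

theorem exists_isCube_subset_le_min_measure_inter {d : ℕ} {τ : ℝ} (hτ : 0 < τ)
    (hτ1 : τ ^ 2 + 2 * τ ≤ 1) {Q Ep Em G : Set (Fin d → ℝ)} (hQ : IsCube Q)
    (hG : MeasurableSet G) (hu : Q = Ep ∪ Em ∪ G)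
    (hmin : ENNReal.ofReal τ * volume G < min (volume Ep) (volume Em)) :
    ∃ W, IsCube W ∧ W ⊆ Q ∧
      ENNReal.ofReal (2 ^ (-(d : ℤ)) * τ ^ 2) * volume W ≤
        min (volume (Ep ∩ W)) (volume (Em ∩ W)) := by
  obtain ⟨a, r, hr, rfl⟩ := hQ
  have h2d : (2 : ℝ) ^ (-(d : ℤ)) * 2 ^ d = 1 := by simp
  have h2d1 : (2 : ℝ) ^ (-(d : ℤ)) ≤ 1 := zpow_le_one_of_nonpos₀ one_le_two (by simp)
  set σ := ENNReal.ofReal (2 ^ (-(d : ℤ)) * τ ^ 2)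
  have hσt : σ * 2 ^ d ≤ ENNReal.ofReal τ ^ 2 := by
    rw [← ENNReal.ofReal_pow hτ.le, ← ENNReal.ofReal_ofNat, ← ENNReal.ofReal_pow zero_le_two,
      ← ENNReal.ofReal_mul (by positivity), mul_right_comm, h2d, one_mul]
  have hsum : σ + ENNReal.ofReal τ ^ 2 + ENNReal.ofReal τ ≤ 1 := by
    rw [← ENNReal.ofReal_pow hτ.le, ← ENNReal.ofReal_add (by positivity) (by positivity),
      ← ENNReal.ofReal_add (by positivity) hτ.le, ENNReal.ofReal_le_one]
    nlinarith
  have ht : ENNReal.ofReal τ ≠ 0 := (ENNReal.ofReal_pos.2 hτ).ne'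
  set Q := univ.pi fun i => Icc (a i) (a i + r)
  have hEp : Ep ⊆ Q := hu ▸ subset_union_left.trans subset_union_left
  have hEm : Em ⊆ Q := hu ▸ subset_union_right.trans subset_union_left
  by_cases hp : volume Ep < σ * volume Q
  · obtain ⟨W, hW, hWQ, hE, hF⟩ := exists_isCube_subset_le_measure_inter_of_lt hr ht hσt hsum hG
      hEp hu.subset hp (hmin.trans_le (min_le_left _ _))
    exact ⟨W, hW, hWQ, le_min hE hF⟩
  by_cases hm : volume Em < σ * volume Q
  · obtain ⟨W, hW, hWQ, hE, hF⟩ := exists_isCube_subset_le_measure_inter_of_lt hr ht hσt hsum hG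
      hEm (hu.trans_subset (by rw [union_comm Ep Em])) hm (hmin.trans_le (min_le_right _ _))
    exact ⟨W, hW, hWQ, le_min hF hE⟩
  refine ⟨Q, ⟨a, r, hr, rfl⟩, subset_rfl, le_min ?_ ?_⟩
  · rwa [inter_eq_left.2 hEp, ← not_lt]
  · rwa [inter_eq_left.2 hEm, ← not_lt]

theorem isJSPair_isCube {d : ℕ} {τ : ℝ} (hτ : 0 < τ) (hτ1 : τ ^ 2 + 2 * τ ≤ 1) :
    IsJSPair volume {C : Set (Fin d → ℝ) | IsCube C} τ (2 ^ (-(d : ℤ)) * τ ^ 2) := by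
  refine ⟨hτ, by positivity, fun Q hQ Ep Em G _ _ hG _ _ _ hu hmin => ?_⟩
  obtain ⟨W, hW, hWQ, hWmin⟩ := exists_isCube_subset_le_min_measure_inter hτ hτ1 hQ hG hu hmin
  exact ⟨W, hW, hWQ, by simpa only [inter_comm W] using hWmin⟩

lemma sq_sqrt_two_sub_one : (√2 - 1) ^ 2 = 3 - 2 * √2 := by
  nlinarith [Real.sq_sqrt zero_le_two]

theorem stmt2 {d : ℕ}
    (Q Ep Em G : Set (Fin d → ℝ)) (hQ : IsCube Q)
    (hG : MeasurableSet G)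
    (hu : Q = Ep ∪ Em ∪ G)
    (hmin : ENNReal.ofReal (Real.sqrt 2 - 1) * volume G < min (volume Ep) (volume Em)) :
    (∃ W : Set (Fin d → ℝ), IsCube W ∧ W ⊆ Q ∧
      ENNReal.ofReal ((2:ℝ) ^ (-(d:ℤ)) * (3 - 2 * Real.sqrt 2)) * volume W ≤
        min (volume (Ep ∩ W)) (volume (Em ∩ W))) ∧
    IsJSPair volume {C : Set (Fin d → ℝ) | IsCube C}
      (Real.sqrt 2 - 1) ((2:ℝ) ^ (-(d:ℤ)) * (3 - 2 * Real.sqrt 2)) := by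
  have hτ : 0 < √2 - 1 := sub_pos.2 Real.one_lt_sqrt_two
  have hτ1 : (√2 - 1) ^ 2 + 2 * (√2 - 1) ≤ 1 := by rw [sq_sqrt_two_sub_one]; linarith
  rw [← sq_sqrt_two_sub_one]
  exact ⟨exists_isCube_subset_le_min_measure_inter hτ hτ1 hQ hG hu hmin, isJSPair_isCube hτ hτ1⟩
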